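/- arXiv:2209.09805 — 2 statements merged into one kernel-verified Lean document; each statement's English description precedes it below -/
import Mathlib

section
/- Let g ≥ 2 be an integer, and let p > q > 0 be coprime integers such that p does not divide 2g - 2. Then there exists an integer i for which the equation ⌊(i + p·s)/q⌋ = g - 1 has an integer solution s, but the equation ⌊(i + p·s)/q⌋ = 1 - g has no integer solution s. -/
/-!
The equation `⌊(x + p s)/q⌋ = m` is solvable in `s` exactly when the residue of `x - q m`
modulo `p` is below `q`. Let `r` be the residue of `q (2g - 2)` modulo `p`; it is nonzero since
`p` is coprime to `q` and does not divide `2g - 2`. For `i = q (1 - g) + max q r` the residue of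
`i - q (1 - g)` is `max q r ∈ [q, p)`, while that of `i - q (g - 1)` is `max q r - r ∈ [0, q)`.
-/

lemma Int.floor_intCast_div_intCast_of_pos (x : ℤ) {q : ℤ} (hq : 0 < q) :
    ⌊(x : ℚ) / q⌋ = x / q := by
  lift q to ℕ using hq.le
  exact_mod_cast Rat.floor_intCast_div_natCast x q

lemma Int.exists_add_mul_ediv_eq_iff {x m p q : ℤ} (hp : 0 < p) (hq : 0 < q) :
    (∃ s, (x + p * s) / q = m) ↔ (x - q * m) % p < q := by
  constructor
  · rintro ⟨s, hs⟩
    obtain ⟨hlo, hhi⟩ := (Int.ediv_eq_iff_of_pos hq).mp hs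
    have hshift : x - q * m = (x + p * s - m * q) + p * -s := by ring
    have hquot : 0 ≤ (x + p * s - m * q) / p := Int.ediv_nonneg (by linarith) hp.le
    rw [hshift, Int.add_mul_emod_self_left, Int.emod_def]
    nlinarith
  · intro h
    refine ⟨-((x - q * m) / p), (Int.ediv_eq_iff_of_pos hq).mpr ?_⟩
    have hdef := Int.emod_def (x - q * m) p
    have hnonneg := Int.emod_nonneg (x - q * m) hp.ne'
    constructor <;> linarith

theorem stmt_2_general (g p q : ℤ) (hq : 0 < q) (hpq : q < p)
    (hcop : IsCoprime p q) (hndvd : ¬ p ∣ (2 * g - 2)) :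
    ∃ i : ℤ,
      (∃ s : ℤ, ⌊((i + p * s : ℤ) : ℚ) / (q : ℚ)⌋ = g - 1) ∧
      ¬ (∃ s : ℤ, ⌊((i + p * s : ℤ) : ℚ) / (q : ℚ)⌋ = 1 - g) := by
  have hp : 0 < p := hq.trans hpq
  set r := q * (2 * g - 2) % p with hr_def
  have hr : r ≠ 0 := fun h => hndvd (hcop.dvd_of_dvd_mul_left (Int.dvd_of_emod_eq_zero h))
  have hr0 : 0 ≤ r := Int.emod_nonneg _ hp.ne'
  have hrp : r < p := Int.emod_lt_of_pos _ hp
  refine ⟨q * (1 - g) + max q r, ?_, ?_⟩ <;>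
    simp only [Int.floor_intCast_div_intCast_of_pos _ hq, Int.exists_add_mul_ediv_eq_iff hp hq]
  · have hshift :
        q * (1 - g) + max q r - q * (g - 1) = (max q r - r) + p * -(q * (2 * g - 2) / p) := by
      rw [hr_def, Int.emod_def]; ring
    rw [hshift, Int.add_mul_emod_self_left, Int.emod_eq_of_lt] <;> omega
  · rw [add_sub_cancel_left, Int.emod_eq_of_lt] <;> omega

/-- If `g ≥ 2` and `p > q > 0` are coprime with `p ∤ 2g - 2`, then there is an integer `i`
such that `⌊(i + p s)/q⌋ = g - 1` has an integer solution `s` but `⌊(i + p s)/q⌋ = 1 - g`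
does not. -/
theorem stmt_2 (g p q : ℤ) (hg : 2 ≤ g) (hq : 0 < q) (hpq : q < p)
    (hcop : IsCoprime p q) (hndvd : ¬ p ∣ (2 * g - 2)) :
    ∃ i : ℤ,
      (∃ s : ℤ, ⌊((i + p * s : ℤ) : ℚ) / (q : ℚ)⌋ = g - 1) ∧
      ¬ (∃ s : ℤ, ⌊((i + p * s : ℤ) : ℚ) / (q : ℚ)⌋ = 1 - g) :=
  stmt_2_general g p q hq hpq hcop hndvd
end

section
/- Suppose r̂₀, ν̂ are integers with r̂₀ ≥ |ν̂| ≥ 0, r̂₀ - |ν̂| even, ν̂ zero or odd, and suppose there exist coprime integers p, q with 0 < p ≤ q such that q·r̂₀ + |p - q·ν̂| = 4q - p. Then either (r̂₀, ν̂) ∈ {(3,1), (2,0), (1,-1)}; moreover in the latter two cases p = q = 1. -/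
/-!
Split on the sign of `ν`. For `ν > 0` the absolute value opens as `qν - p`, so
`q (r₀ + ν) = 4q`, i.e. `r₀ + ν = 4`, and oddness of `ν ≤ r₀` forces `ν = 1`. For `ν ≤ 0` it opens
as `p + q|ν|`, so `q (4 - r₀ - |ν|) = 2p`; the parity hypothesis makes `4 - r₀ - |ν|` even, hence
`q ∣ p`, and coprimality with `p ≤ q` gives `p = q = 1` and `r₀ + |ν| = 2`.
-/

lemma Int.eq_one_of_isCoprime_of_mul_eq {p q k : ℤ} (hp : 0 < p) (hpq : p ≤ q)
    (hcop : IsCoprime p q) (h : q * k = p) : p = 1 ∧ q = 1 := by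
  have hq : q = 1 := by
    have hunit : IsUnit q := hcop.isUnit_of_dvd' ⟨k, h.symm⟩ dvd_rfl
    rcases Int.isUnit_iff.mp hunit with hq | hq
    · exact hq
    · omega
  exact ⟨by omega, hq⟩

lemma Int.abs_sub_mul_of_nonpos {p q ν : ℤ} (hp : 0 ≤ p) (hq : 0 ≤ q) (hν : ν ≤ 0) :
    |p - q * ν| = p + q * |ν| := by
  rw [abs_of_nonpos hν, abs_of_nonneg (by nlinarith)]
  ring

lemma Int.abs_sub_mul_of_pos {p q ν : ℤ} (hpq : p ≤ q) (hq : 0 ≤ q) (hν : 0 < ν) :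
    |p - q * ν| = q * ν - p := by
  rw [abs_of_nonpos (by nlinarith)]
  ring

/-- If `r̂₀ ≥ |ν̂| ≥ 0`, `r̂₀ - |ν̂|` is even, `ν̂` is zero or odd, and there are coprime
integers `0 < p ≤ q` with `q r̂₀ + |p - q ν̂| = 4q - p`, then `(r̂₀, ν̂)` is one of
`(3,1)`, `(2,0)`, `(1,-1)`, and in the latter two cases `p = q = 1`. -/
theorem stmt_16 (r₀ ν p q : ℤ) (habs : |ν| ≤ r₀) (heven : Even (r₀ - |ν|))
    (hodd : ν = 0 ∨ Odd ν) (hp : 0 < p) (hpq : p ≤ q) (hcop : IsCoprime p q)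
    (hD : q * r₀ + |p - q * ν| = 4 * q - p) :
    (r₀ = 3 ∧ ν = 1) ∨ (r₀ = 2 ∧ ν = 0 ∧ p = 1 ∧ q = 1) ∨
      (r₀ = 1 ∧ ν = -1 ∧ p = 1 ∧ q = 1) := by
  have hq : 0 < q := hp.trans_le hpq
  rcases le_or_gt ν 0 with hν | hν
  · rw [Int.abs_sub_mul_of_nonpos hp.le hq.le hν] at hD
    obtain ⟨k, hk⟩ : Even (4 - (r₀ + |ν|)) := by
      rw [show 4 - (r₀ + |ν|) = 2 * (2 - |ν|) - (r₀ - |ν|) by ring]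
      exact (even_two_mul _).sub heven
    obtain ⟨rfl, rfl⟩ := Int.eq_one_of_isCoprime_of_mul_eq (k := k) hp hpq hcop (by
      have : q * (k + k) = 2 * p := by rw [← hk]; linarith
      linarith)
    rw [abs_of_nonpos hν] at habs hD
    rcases hodd with rfl | ⟨m, rfl⟩ <;> omega
  · left
    rw [Int.abs_sub_mul_of_pos hpq hq.le hν] at hD
    have hsum : r₀ + ν = 4 := mul_left_cancel₀ hq.ne' (by linarith)
    rw [abs_of_pos hν] at habs
    obtain ⟨m, rfl⟩ := hodd.resolve_left hν.ne'
    omega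
end
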